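/- arXiv:1906.08241 — 5 statements merged into one kernel-verified Lean document; each statement's English description precedes it below -/
import Mathlib

section
/- Let d be a positive integer, let w = (m, C) with m ∈ ℝ^d and C ∈ ℝ^{d×d}, and let T_w(u) = Cu + m. Viewing w as the vector of all d + d² parameters (the entries of m and of C), let ∇_w T_w(u) denote the (d+d²) × d matrix whose rows are the partial derivatives of T_w(u) with respect to the individual parameters. Then for every u ∈ ℝ^d, (∇_w T_w(u))ᵀ (∇_w T_w(u)) = (1 + ‖u‖₂²) I, where I is the d × d identity matrix. -/
/-!
For fixed `u`, each coordinate of `T_w(u)` is a linear function of `w`, so the Jacobian is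
the constant block matrix whose `m`-block is `I` and whose `C`-block has entry `δ_{i'i} u_j` in
row `(i', j)`, column `i`. Hence `JᵀJ = I + ‖u‖² I`: column `i` of the `C`-block is `u`, placed
in the rows `(i, ·)`, and distinct columns have disjoint supports.
-/

noncomputable section

open MeasureTheory ProbabilityTheory
open scoped RealInnerProductSpace

/-- The affine reparameterization map `T_w(u) = C u + m`, where the parameter vector
`w ∈ ℝ^{d+d²}` collects the entries of `m` (at indices `Sum.inl i`) and of `C`
(at indices `Sum.inr (i, j)`). -/
def Tmap {d : ℕ} (w : EuclideanSpace ℝ (Fin d ⊕ Fin d × Fin d))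
    (u : EuclideanSpace ℝ (Fin d)) : EuclideanSpace ℝ (Fin d) :=
  (WithLp.equiv 2 _).symm fun i => (∑ j, w (Sum.inr (i, j)) * u j) + w (Sum.inl i)

/-- The parameter vector `w = (m, C) ∈ ℝ^{d+d²}`. -/
def param {d : ℕ} (m : EuclideanSpace ℝ (Fin d)) (C : Matrix (Fin d) (Fin d) ℝ) :
    EuclideanSpace ℝ (Fin d ⊕ Fin d × Fin d) :=
  (WithLp.equiv 2 _).symm (Sum.elim (fun i => m i) fun p => C p.1 p.2)

namespace Tmap

variable {d : ℕ}

def coordCLM (u : EuclideanSpace ℝ (Fin d)) (i : Fin d) :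
    EuclideanSpace ℝ (Fin d ⊕ Fin d × Fin d) →L[ℝ] ℝ :=
  ∑ j, u j • EuclideanSpace.proj (Sum.inr (i, j)) + EuclideanSpace.proj (Sum.inl i)

theorem coordCLM_apply (u : EuclideanSpace ℝ (Fin d)) (i : Fin d)
    (w : EuclideanSpace ℝ (Fin d ⊕ Fin d × Fin d)) :
    coordCLM u i w = Tmap w u i := by
  simp [coordCLM, Tmap, mul_comm]

theorem fderiv_coord_apply (u : EuclideanSpace ℝ (Fin d)) (i : Fin d)
    (w v : EuclideanSpace ℝ (Fin d ⊕ Fin d × Fin d)) :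
    fderiv ℝ (fun w' => Tmap w' u i) w v = Tmap v u i := by
  have hlin : (fun w' => Tmap w' u i) = coordCLM u i :=
    funext fun w' => (coordCLM_apply u i w').symm
  rw [hlin, ContinuousLinearMap.fderiv, coordCLM_apply]

theorem single_inl_apply (u : EuclideanSpace ℝ (Fin d)) (i' i : Fin d) :
    Tmap (EuclideanSpace.single (Sum.inl i') 1) u i = (1 : Matrix (Fin d) (Fin d) ℝ) i' i := by
  simp [Tmap, Matrix.one_apply, eq_comm]

theorem single_inr_apply (u : EuclideanSpace ℝ (Fin d)) (i' j i : Fin d) :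
    Tmap (EuclideanSpace.single (Sum.inr (i', j)) 1) u i =
      (1 : Matrix (Fin d) (Fin d) ℝ) i' i * u j := by
  simp [Tmap, Matrix.one_apply, ite_and, eq_comm]

end Tmap

def affineParamJacobian {n : Type*} [DecidableEq n] (u : EuclideanSpace ℝ n) :
    Matrix (n ⊕ n × n) n ℝ :=
  Matrix.fromRows 1 (Matrix.of fun p i => (1 : Matrix n n ℝ) p.1 i * u p.2)

theorem transpose_mul_self_affineParamJacobian {n : Type*} [Fintype n] [DecidableEq n]
    (u : EuclideanSpace ℝ n) :
    (affineParamJacobian u).transpose * affineParamJacobian u =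
      (1 + ‖u‖ ^ 2) • (1 : Matrix n n ℝ) := by
  rw [affineParamJacobian, Matrix.transpose_fromRows, Matrix.fromCols_mul_fromRows,
    Matrix.transpose_one, Matrix.one_mul, add_smul, one_smul]
  congr 1
  rw [EuclideanSpace.real_norm_sq_eq]
  ext i k
  simp [Matrix.mul_apply, Fintype.sum_prod_type, Matrix.one_apply, sq, eq_comm]

theorem stmt_0_general (d : ℕ) (u : EuclideanSpace ℝ (Fin d))
    (w : EuclideanSpace ℝ (Fin d ⊕ Fin d × Fin d))
    (J : Matrix (Fin d ⊕ Fin d × Fin d) (Fin d) ℝ)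
    (hJ : ∀ p i, J p i =
      fderiv ℝ (fun w' => Tmap w' u i) w (EuclideanSpace.single p 1)) :
    J.transpose * J = (1 + ‖u‖ ^ 2) • (1 : Matrix (Fin d) (Fin d) ℝ) := by
  have hJ_eq : J = affineParamJacobian u := by
    ext (i' | ⟨i', j⟩) i <;>
      simp [hJ, Tmap.fderiv_coord_apply, Tmap.single_inl_apply, Tmap.single_inr_apply,
        affineParamJacobian]
  rw [hJ_eq, transpose_mul_self_affineParamJacobian]

/-- the Jacobian `J` of `w ↦ T_w(u)` (rows indexed by the `d + d²` parameters)
satisfies `Jᵀ J = (1 + ‖u‖₂²) I`. -/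
theorem stmt_0 (d : ℕ) (hd : 0 < d) (u : EuclideanSpace ℝ (Fin d))
    (w : EuclideanSpace ℝ (Fin d ⊕ Fin d × Fin d))
    (J : Matrix (Fin d ⊕ Fin d × Fin d) (Fin d) ℝ)
    (hJ : ∀ p i, J p i =
      fderiv ℝ (fun w' => Tmap w' u i) w (EuclideanSpace.single p 1)) :
    J.transpose * J = (1 + ‖u‖ ^ 2) • (1 : Matrix (Fin d) (Fin d) ℝ) :=
  stmt_0_general d u w J hJ
end
end

section
/- Let d be a positive integer, let f : ℝ^d → ℝ be differentiable, let w = (m, C) with m ∈ ℝ^d and C ∈ ℝ^{d×d}, and let T_w(u) = Cu + m. Then for every u ∈ ℝ^d, the squared Euclidean norm of the gradient of the map w ↦ f(T_w(u)) with respect to all d + d² parameters (entries of m and C) equals ‖∇f(T_w(u))‖₂² · (1 + ‖u‖₂²), where ∇f is the gradient of f on ℝ^d. -/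
/-! For fixed `u` the map `w ↦ T_w(u)` is linear, so by the chain rule the gradient of
`w ↦ f(T_w(u))` is the adjoint of that linear map applied to `v = ∇f(T_w(u))`. The adjoint
sends `v` to the parameter vector `(v, v uᵀ)`, whose squared norm is
`‖v‖² + ‖v‖² ‖u‖² = ‖v‖² (1 + ‖u‖²)`. -/

noncomputable section

open MeasureTheory ProbabilityTheory
open scoped RealInnerProductSpace

theorem HasGradientAt.comp_continuousLinearMap {E F : Type*} [NormedAddCommGroup E]
    [InnerProductSpace ℝ E] [CompleteSpace E] [NormedAddCommGroup F] [InnerProductSpace ℝ F]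
    [CompleteSpace F] {f : F → ℝ} {v : F} (L : E →L[ℝ] F) {x : E}
    (hf : HasGradientAt f v (L x)) : HasGradientAt (f ∘ L) (L.adjoint v) x := by
  rw [hasGradientAt_iff_hasFDerivAt]
  refine (hf.hasFDerivAt.comp x L.hasFDerivAt).congr_fderiv ?_
  ext z
  simp [ContinuousLinearMap.adjoint_inner_left]

section Affine

variable {d : ℕ}

def TmapCLM (u : EuclideanSpace ℝ (Fin d)) :
    EuclideanSpace ℝ (Fin d ⊕ Fin d × Fin d) →L[ℝ] EuclideanSpace ℝ (Fin d) :=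
  LinearMap.toContinuousLinearMap
    { toFun := fun w => Tmap w u
      map_add' := fun w w' => by
        ext i
        simp only [Tmap, WithLp.equiv_symm_apply, PiLp.add_apply, add_mul,
          Finset.sum_add_distrib]
        ring
      map_smul' := fun c w => by
        ext i
        simp only [Tmap, WithLp.equiv_symm_apply, PiLp.smul_apply, smul_eq_mul,
          RingHom.id_apply, mul_add, Finset.mul_sum, mul_assoc] }

@[simp]
theorem TmapCLM_apply (u : EuclideanSpace ℝ (Fin d))
    (w : EuclideanSpace ℝ (Fin d ⊕ Fin d × Fin d)) :
    TmapCLM u w = Tmap w u :=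
  rfl

theorem inner_param_vecMulVec (u v : EuclideanSpace ℝ (Fin d))
    (z : EuclideanSpace ℝ (Fin d ⊕ Fin d × Fin d)) :
    ⟪param v (Matrix.vecMulVec v u), z⟫ = ⟪v, Tmap z u⟫ := by
  simp only [PiLp.inner_apply, param, Tmap, WithLp.equiv_symm_apply,
    RCLike.inner_apply, conj_trivial, Fintype.sum_sum_type, Sum.elim_inl, Sum.elim_inr,
    Fintype.sum_prod_type, Matrix.vecMulVec_apply, add_mul, Finset.sum_mul, Finset.sum_add_distrib]
  rw [add_comm]
  simp only [mul_assoc, mul_comm (u _) (v _)]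

theorem TmapCLM_adjoint_apply (u v : EuclideanSpace ℝ (Fin d)) :
    (TmapCLM u).adjoint v = param v (Matrix.vecMulVec v u) :=
  ext_inner_right ℝ fun z => by
    rw [ContinuousLinearMap.adjoint_inner_left, inner_param_vecMulVec, TmapCLM_apply]

theorem norm_param_sq (m : EuclideanSpace ℝ (Fin d)) (C : Matrix (Fin d) (Fin d) ℝ) :
    ‖param m C‖ ^ 2 = ‖m‖ ^ 2 + ∑ i, ∑ j, C i j ^ 2 := by
  simp only [EuclideanSpace.real_norm_sq_eq, param, WithLp.equiv_symm_apply,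
    Fintype.sum_sum_type, Sum.elim_inl, Sum.elim_inr, Fintype.sum_prod_type]

theorem norm_param_vecMulVec_sq (u v : EuclideanSpace ℝ (Fin d)) :
    ‖param v (Matrix.vecMulVec v u)‖ ^ 2 = ‖v‖ ^ 2 * (1 + ‖u‖ ^ 2) := by
  rw [norm_param_sq]
  simp only [Matrix.vecMulVec_apply, mul_pow, ← Finset.mul_sum, ← Finset.sum_mul,
    EuclideanSpace.real_norm_sq_eq]
  ring

theorem hasGradientAt_comp_Tmap {f : EuclideanSpace ℝ (Fin d) → ℝ}
    {v u : EuclideanSpace ℝ (Fin d)} {w : EuclideanSpace ℝ (Fin d ⊕ Fin d × Fin d)}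
    (hf : HasGradientAt f v (Tmap w u)) :
    HasGradientAt (fun w' => f (Tmap w' u)) (param v (Matrix.vecMulVec v u)) w := by
  rw [← TmapCLM_adjoint_apply]
  exact hf.comp_continuousLinearMap (TmapCLM u)

end Affine

theorem stmt_1_general (d : ℕ) (f : EuclideanSpace ℝ (Fin d) → ℝ)
    (hf : Differentiable ℝ f)
    (w : EuclideanSpace ℝ (Fin d ⊕ Fin d × Fin d)) (u : EuclideanSpace ℝ (Fin d)) :
    ‖gradient (fun w' => f (Tmap w' u)) w‖ ^ 2
      = ‖gradient f (Tmap w u)‖ ^ 2 * (1 + ‖u‖ ^ 2) := by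
  rw [(hasGradientAt_comp_Tmap (hf _).hasGradientAt).gradient, norm_param_vecMulVec_sq]

/-- for differentiable `f`, the squared norm of the gradient of
`w ↦ f(T_w(u))` with respect to all `d + d²` parameters equals
`‖∇f(T_w(u))‖₂² (1 + ‖u‖₂²)`. -/
theorem stmt_1 (d : ℕ) (hd : 0 < d) (f : EuclideanSpace ℝ (Fin d) → ℝ)
    (hf : Differentiable ℝ f)
    (w : EuclideanSpace ℝ (Fin d ⊕ Fin d × Fin d)) (u : EuclideanSpace ℝ (Fin d)) :
    ‖gradient (fun w' => f (Tmap w' u)) w‖ ^ 2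
      = ‖gradient f (Tmap w u)‖ ^ 2 * (1 + ‖u‖ ^ 2) :=
  stmt_1_general d f hf w u
end
end

section
/- Let u be a random vector in ℝ^d whose components u₁, …, u_d are i.i.d. with E[u₁] = E[u₁³] = 0, Var[u₁] = 1, and E[u₁⁴] = κ < ∞. Let T_w(u) = Cu + m for m ∈ ℝ^d and C ∈ ℝ^{d×d}. Then for any fixed vector z̄ ∈ ℝ^d, E[‖T_w(u) − z̄‖₂² (1 + ‖u‖₂²)] = (d+1) ‖m − z̄‖₂² + (d+κ) ‖C‖_F², where ‖C‖_F is the Frobenius norm of C. -/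
/-!
Expanding the square row by row, `‖C u + m - z̄‖² (1 + ‖u‖²)` is a quadratic polynomial in the
coordinates of `u` multiplied by the weight `K = 1 + ‖u‖²`, so its expectation only involves
`E[K] = d + 1`, `E[u_j K] = 0` and `E[u_j u_j' K] = δ_{jj'} (d + κ)`. Writing `K` out, these
reduce to the moments `E[u_j u_k²] = 0` (the third moment vanishes) and
`E[u_j u_j' u_k²] = δ_{jj'} (κ if k = j, else 1)`, which follow from independence since a lone
centred factor `u_j` kills every mixed moment.
-/

noncomputable section

open MeasureTheory ProbabilityTheory
open scoped RealInnerProductSpace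

open Finset
open scoped ENNReal

instance ENNReal.HolderTriple.instFourFourTwo : ENNReal.HolderTriple 4 4 2 :=
  ⟨by rw [← two_mul, show (4 : ℝ≥0∞) = 2 * 2 by norm_num, ENNReal.mul_inv (by simp) (by simp),
    ← mul_assoc, ENNReal.mul_inv_cancel (by simp) (by simp), one_mul]⟩

lemma Tmap_param_apply {d : ℕ} (m : EuclideanSpace ℝ (Fin d)) (C : Matrix (Fin d) (Fin d) ℝ)
    (v : EuclideanSpace ℝ (Fin d)) (i : Fin d) : Tmap (param m C) v i = ∑ j, C i j * v j + m i :=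
  rfl

lemma sq_sum_mul_add_mul_eq {ι : Type*} [Fintype ι] (c x : ι → ℝ) (b K : ℝ) :
    (∑ j, c j * x j + b) ^ 2 * K =
      ∑ j, ∑ j', c j * c j' * (x j * x j' * K) + ∑ j, 2 * b * c j * (x j * K) + b ^ 2 * K := by
  rw [add_sq, sq, sum_mul_sum, add_mul, add_mul, sum_mul, mul_sum, sum_mul]
  congr 2
  · exact sum_congr rfl fun j _ => by rw [sum_mul]; exact sum_congr rfl fun j' _ => by ring
  · rw [sum_mul]; exact sum_congr rfl fun j _ => by ring

structure IsStandardized {Ω ι : Type*} [MeasurableSpace Ω] (X : ι → Ω → ℝ) (μ : Measure Ω)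
    (κ : ℝ) : Prop where
  measurable : ∀ i, Measurable (X i)
  indep : iIndepFun X μ
  integral_eq_zero : ∀ i, ∫ ω, X i ω ∂μ = 0
  integral_sq : ∀ i, ∫ ω, X i ω ^ 2 ∂μ = 1
  integral_pow_three : ∀ i, ∫ ω, X i ω ^ 3 ∂μ = 0
  integral_pow_four : ∀ i, ∫ ω, X i ω ^ 4 ∂μ = κ
  memLp_four : ∀ i, MemLp (X i) 4 μ

namespace IsStandardized

variable {Ω ι : Type*} [MeasurableSpace Ω] {μ : Measure Ω} {X : ι → Ω → ℝ} {κ : ℝ}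
  (hX : IsStandardized X μ κ)
include hX

lemma memLp_two [IsFiniteMeasure μ] (i : ι) : MemLp (X i) 2 μ :=
  (hX.memLp_four i).mono_exponent (by norm_num)

lemma memLp_two_mul (i j : ι) : MemLp (fun ω => X i ω * X j ω) 2 μ :=
  (hX.memLp_four j).mul' (hX.memLp_four i)

lemma memLp_two_sq (i : ι) : MemLp (fun ω => X i ω ^ 2) 2 μ := by
  simpa only [sq] using hX.memLp_two_mul i i

lemma integral_mul_comp_eq_zero {i j k : ι} (hij : i ≠ j) (hik : i ≠ k) {φ : ℝ × ℝ → ℝ}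
    (hφ : Measurable φ) : ∫ ω, X i ω * φ (X j ω, X k ω) ∂μ = 0 := by
  have hind : IndepFun (X i) (fun ω => φ (X j ω, X k ω)) μ :=
    (hX.indep.indepFun_prodMk hX.measurable j k i hij.symm hik.symm).symm.comp measurable_id hφ
  rw [hind.integral_fun_mul_eq_mul_integral (hX.measurable i).aestronglyMeasurable
    (hφ.comp ((hX.measurable j).prodMk (hX.measurable k))).aestronglyMeasurable,
    hX.integral_eq_zero, zero_mul]

lemma integral_mul_sq (j k : ι) : ∫ ω, X j ω * X k ω ^ 2 ∂μ = 0 := by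
  rcases eq_or_ne j k with rfl | h
  · simpa only [← pow_succ'] using hX.integral_pow_three j
  · exact hX.integral_mul_comp_eq_zero h h (measurable_fst.pow_const 2)

lemma integral_sq_mul_sq_of_ne {j k : ι} (h : j ≠ k) :
    ∫ ω, X j ω ^ 2 * X k ω ^ 2 ∂μ = 1 := by
  have hind : IndepFun (fun ω => X j ω ^ 2) (fun ω => X k ω ^ 2) μ :=
    (hX.indep.indepFun h).comp (measurable_id.pow_const 2) (measurable_id.pow_const 2)
  rw [hind.integral_fun_mul_eq_mul_integral ((hX.measurable j).pow_const 2).aestronglyMeasurable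
    ((hX.measurable k).pow_const 2).aestronglyMeasurable, hX.integral_sq, hX.integral_sq, one_mul]

section

variable [DecidableEq ι]

lemma integral_mul (j k : ι) : ∫ ω, X j ω * X k ω ∂μ = if j = k then 1 else 0 := by
  split_ifs with h
  · subst h
    simpa only [sq] using hX.integral_sq j
  · exact hX.integral_mul_comp_eq_zero h h measurable_fst

lemma integral_mul_mul_sq (j j' k : ι) :
    ∫ ω, X j ω * X j' ω * X k ω ^ 2 ∂μ = if j = j' then (if j = k then κ else 1) else 0 := by
  rcases eq_or_ne j j' with rfl | hjj'
  · rw [if_pos rfl]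
    simp only [← sq]
    split_ifs with hjk
    · subst hjk
      simpa only [← pow_add] using hX.integral_pow_four j
    · exact hX.integral_sq_mul_sq_of_ne hjk
  rw [if_neg hjj']
  rcases eq_or_ne j k with rfl | hjk
  · calc ∫ ω, X j ω * X j' ω * X j ω ^ 2 ∂μ = ∫ ω, X j' ω * X j ω ^ 3 ∂μ := by
          congr 1; ext ω; ring
      _ = 0 := hX.integral_mul_comp_eq_zero hjj'.symm hjj'.symm (φ := fun p => p.1 ^ 3)
          (by fun_prop)
  · calc ∫ ω, X j ω * X j' ω * X k ω ^ 2 ∂μ = ∫ ω, X j ω * (X j' ω * X k ω ^ 2) ∂μ := by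
          congr 1; ext ω; ring
      _ = 0 := hX.integral_mul_comp_eq_zero hjj' hjk (φ := fun p => p.1 * p.2 ^ 2)
          (by fun_prop)

end

variable [Fintype ι]

lemma memLp_two_one_add_sum_sq [IsFiniteMeasure μ] : MemLp (fun ω => 1 + ∑ k, X k ω ^ 2) 2 μ :=
  (memLp_const (1 : ℝ)).add (memLp_finsetSum univ fun k _ => hX.memLp_two_sq k)

lemma integrable_mul_one_add_sum_sq [IsFiniteMeasure μ] {f : Ω → ℝ} (hf : MemLp f 2 μ) :
    Integrable (fun ω => f ω * (1 + ∑ k, X k ω ^ 2)) μ :=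
  hf.integrable_mul hX.memLp_two_one_add_sum_sq

lemma integral_mul_one_add_sum_sq [IsFiniteMeasure μ] {f : Ω → ℝ} (hf : MemLp f 2 μ) :
    ∫ ω, f ω * (1 + ∑ k, X k ω ^ 2) ∂μ = ∫ ω, f ω ∂μ + ∑ k, ∫ ω, f ω * X k ω ^ 2 ∂μ := by
  have hfX : ∀ k ∈ univ, Integrable (fun ω => f ω * X k ω ^ 2) μ :=
    fun k _ => hf.integrable_mul (hX.memLp_two_sq k)
  simp only [mul_add, mul_one, mul_sum]
  rw [integral_add (hf.integrable one_le_two) (integrable_finsetSum _ hfX),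
    integral_finsetSum _ hfX]

lemma integral_one_add_sum_sq [IsProbabilityMeasure μ] :
    ∫ ω, 1 + ∑ k, X k ω ^ 2 ∂μ = Fintype.card ι + 1 := by
  simpa [hX.integral_sq, add_comm] using
    hX.integral_mul_one_add_sum_sq (memLp_const (1 : ℝ))

lemma integral_mul_one_add_sum_sq_eq_zero [IsFiniteMeasure μ] (j : ι) :
    ∫ ω, X j ω * (1 + ∑ k, X k ω ^ 2) ∂μ = 0 := by
  simp [hX.integral_mul_one_add_sum_sq (hX.memLp_two j), hX.integral_eq_zero, hX.integral_mul_sq]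

lemma integral_mul_mul_one_add_sum_sq [IsFiniteMeasure μ] [DecidableEq ι] (j j' : ι) :
    ∫ ω, X j ω * X j' ω * (1 + ∑ k, X k ω ^ 2) ∂μ =
      if j = j' then Fintype.card ι + κ else 0 := by
  rw [hX.integral_mul_one_add_sum_sq (hX.memLp_two_mul j j'), hX.integral_mul]
  simp only [hX.integral_mul_mul_sq]
  split_ifs with h
  · subst h
    have hsplit : ∀ k, (if j = k then κ else 1) = 1 + if j = k then κ - 1 else 0 := fun k => by
      split_ifs <;> ring
    simp only [hsplit, sum_add_distrib, sum_const, card_univ, nsmul_eq_mul, mul_one, sum_ite_eq,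
      mem_univ, if_true]
    ring
  · simp

lemma integrable_sq_sum_mul_add_mul_one_add_sum_sq [IsFiniteMeasure μ] (c : ι → ℝ) (b : ℝ) :
    Integrable (fun ω => (∑ j, c j * X j ω + b) ^ 2 * (1 + ∑ k, X k ω ^ 2)) μ := by
  have hL4 : MemLp (fun ω => ∑ j, c j * X j ω + b) 4 μ :=
    (memLp_finsetSum univ fun j _ => (hX.memLp_four j).const_mul (c j)).add (memLp_const b)
  exact hX.integrable_mul_one_add_sum_sq (by simpa only [sq] using hL4.mul' hL4)

theorem integral_sq_sum_mul_add_mul_one_add_sum_sq [IsProbabilityMeasure μ] (c : ι → ℝ) (b : ℝ) :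
    ∫ ω, (∑ j, c j * X j ω + b) ^ 2 * (1 + ∑ k, X k ω ^ 2) ∂μ =
      (Fintype.card ι + κ) * ∑ j, c j ^ 2 + (Fintype.card ι + 1) * b ^ 2 := by
  classical
  have hint2 : ∀ j j', Integrable (fun ω => X j ω * X j' ω * (1 + ∑ k, X k ω ^ 2)) μ :=
    fun j j' => hX.integrable_mul_one_add_sum_sq (hX.memLp_two_mul j j')
  have hint1 : ∀ j, Integrable (fun ω => X j ω * (1 + ∑ k, X k ω ^ 2)) μ :=
    fun j => hX.integrable_mul_one_add_sum_sq (hX.memLp_two j)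
  have hint0 : Integrable (fun ω => 1 + ∑ k, X k ω ^ 2) μ :=
    hX.memLp_two_one_add_sum_sq.integrable one_le_two
  have hint2' : Integrable
      (fun ω => ∑ j, ∑ j', c j * c j' * (X j ω * X j' ω * (1 + ∑ k, X k ω ^ 2))) μ :=
    integrable_finsetSum _ fun j _ => integrable_finsetSum _ fun j' _ => (hint2 j j').const_mul _
  have hint1' : Integrable (fun ω => ∑ j, 2 * b * c j * (X j ω * (1 + ∑ k, X k ω ^ 2))) μ :=
    integrable_finsetSum _ fun j _ => (hint1 j).const_mul _
  simp only [sq_sum_mul_add_mul_eq]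
  rw [integral_add ?_ (hint0.const_mul _), integral_add hint2' hint1',
    integral_finsetSum _ fun j _ => integrable_finsetSum _ fun j' _ => (hint2 j j').const_mul _,
    integral_finsetSum _ fun j _ => (hint1 j).const_mul _, integral_const_mul,
    hX.integral_one_add_sum_sq]
  · simp only [integral_finsetSum _ fun j' _ => (hint2 _ j').const_mul _, integral_const_mul,
      hX.integral_mul_mul_one_add_sum_sq, hX.integral_mul_one_add_sum_sq_eq_zero, mul_ite,
      mul_zero, sum_ite_eq, mem_univ, if_true, sum_const_zero, add_zero]
    rw [← sum_mul]
    simp only [← sq]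
    ring
  · exact hint2'.add hint1'

end IsStandardized

/-- if `u` is standardized (i.i.d. components, `E[u₁] = E[u₁³] = 0`,
`Var[u₁] = 1`) with fourth moment `κ = E[u₁⁴] < ∞`, then for `T_w(u) = C u + m` and any
fixed `z̄`, `E[‖T_w(u) − z̄‖₂² (1 + ‖u‖₂²)] = (d+1)‖m − z̄‖₂² + (d+κ)‖C‖_F²`. -/
theorem stmt_5 {Ω : Type*} [MeasurableSpace Ω] (μ : Measure Ω) [IsProbabilityMeasure μ]
    (d : ℕ) (hd : 0 < d) (u : Ω → EuclideanSpace ℝ (Fin d))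
    (hmeas : ∀ i, Measurable fun ω => u ω i)
    (hindep : iIndepFun (fun i ω => u ω i) μ)
    (hident : ∀ i j : Fin d, IdentDistrib (fun ω => u ω i) (fun ω => u ω j) μ μ)
    (hmean : ∀ i, ∫ ω, u ω i ∂μ = 0)
    (hthird : ∀ i, ∫ ω, u ω i ^ 3 ∂μ = 0)
    (hvar : ∀ i, ∫ ω, u ω i ^ 2 ∂μ = 1)
    (hL4 : ∀ i, MemLp (fun ω => u ω i) 4 μ)
    (κ : ℝ) (hκ : κ = ∫ ω, u ω ⟨0, hd⟩ ^ 4 ∂μ)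
    (m zbar : EuclideanSpace ℝ (Fin d)) (C : Matrix (Fin d) (Fin d) ℝ) :
    ∫ ω, ‖Tmap (param m C) (u ω) - zbar‖ ^ 2 * (1 + ‖u ω‖ ^ 2) ∂μ
      = ((d : ℝ) + 1) * ‖m - zbar‖ ^ 2 + ((d : ℝ) + κ) * ∑ i, ∑ j, C i j ^ 2 := by
  have hX : IsStandardized (fun i ω => u ω i) μ κ :=
    { measurable := hmeas
      indep := hindep
      integral_eq_zero := hmean
      integral_sq := hvar
      integral_pow_three := hthird
      integral_pow_four := fun i => hκ ▸
        ((hident i ⟨0, hd⟩).comp (measurable_id.pow_const 4)).integral_eq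
      memLp_four := hL4 }
  have hrows : ∀ ω, ‖Tmap (param m C) (u ω) - zbar‖ ^ 2 * (1 + ‖u ω‖ ^ 2) =
      ∑ i, (∑ j, C i j * u ω j + (m - zbar) i) ^ 2 * (1 + ∑ k, u ω k ^ 2) := fun ω => by
    rw [EuclideanSpace.real_norm_sq_eq, EuclideanSpace.real_norm_sq_eq, sum_mul]
    refine sum_congr rfl fun i _ => ?_
    rw [PiLp.sub_apply, PiLp.sub_apply, Tmap_param_apply, add_sub_assoc]
  simp only [hrows]
  rw [integral_finsetSum _ fun i _ =>
    hX.integrable_sq_sum_mul_add_mul_one_add_sum_sq (C i) ((m - zbar) i)]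
  simp only [hX.integral_sq_sum_mul_add_mul_one_add_sum_sq, Fintype.card_fin, sum_add_distrib,
    ← mul_sum, EuclideanSpace.real_norm_sq_eq]
  ring
end
end

section
/- Let M ≥ 0 and z̄ ∈ ℝ^d, and let f(z) = (M/2) ‖z − z̄‖₂². Let u ∼ s where s is standardized with fourth moment κ = E[u₁⁴] < ∞, let T_w(u) = Cu + m, and let g = ∇_w f(T_w(u)) with respect to all d + d² parameters w = (m, C). Then E‖g‖₂² = M² ((d+1) ‖m − z̄‖₂² + (d+κ) ‖C‖_F²); in particular, the upper bound E‖g‖₂² ≤ M² ((d+1) ‖m − z̄‖₂² + (d+κ) ‖C‖_F²) for M-smooth f with stationary point z̄ is attained with equality, and is therefore unimprovable. -/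
/-!
The map `w ↦ T_w(u)` is linear with adjoint `r ↦ (r, r uᵀ)`, so the gradient is
`g = M (r, r uᵀ)` with `r = C u + m − z̄`, and `‖g‖² = M² ‖r‖² (1 + ‖u‖²)`.
Each `rᵢ` is a linear combination of the augmented vector `(1, u₁, …, u_d)`, and under the weight
`1 + ‖u‖²` the coordinates of that vector are orthogonal in `L²`: the mixed moments vanish by
independence, zero means and zero third moments, while the diagonal ones are `d + 1` for the
constant coordinate and `d + κ` for the others.
-/

noncomputable section

open MeasureTheory ProbabilityTheory
open scoped RealInnerProductSpace

open ContinuousLinearMap in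
theorem hasGradientAt_const_mul_norm_sub_sq {E F : Type*} [NormedAddCommGroup E]
    [InnerProductSpace ℝ E] [CompleteSpace E] [NormedAddCommGroup F] [InnerProductSpace ℝ F]
    [CompleteSpace F] (A : E →L[ℝ] F) (b : F) (c : ℝ) (x : E) :
    HasGradientAt (fun x => c * ‖A x - b‖ ^ 2) ((2 * c) • adjoint A (A x - b)) x := by
  rw [hasGradientAt_iff_hasFDerivAt]
  refine (((A.hasFDerivAt.sub_const b).norm_sq).const_mul c).congr_fderiv ?_
  ext v
  simp only [map_sub, sub_comp, smul_apply, sub_apply, comp_apply, coe_innerSL_apply,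
    nsmul_eq_mul, Nat.cast_ofNat, smul_eq_mul, map_smul, InnerProductSpace.toDual_apply_apply,
    adjoint_inner_left]
  ring

section Reparameterization

variable {d : ℕ}

theorem Tmap_add_left (w w' : EuclideanSpace ℝ (Fin d ⊕ Fin d × Fin d))
    (y : EuclideanSpace ℝ (Fin d)) : Tmap (w + w') y = Tmap w y + Tmap w' y := by
  ext i
  simp only [Tmap, PiLp.add_apply, add_mul, Finset.sum_add_distrib, WithLp.equiv_symm_apply]
  ring

theorem Tmap_smul_left (c : ℝ) (w : EuclideanSpace ℝ (Fin d ⊕ Fin d × Fin d))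
    (y : EuclideanSpace ℝ (Fin d)) : Tmap (c • w) y = c • Tmap w y := by
  ext i
  simp [Tmap, Finset.mul_sum, mul_add, mul_assoc]

def tmapCLM (y : EuclideanSpace ℝ (Fin d)) :
    EuclideanSpace ℝ (Fin d ⊕ Fin d × Fin d) →L[ℝ] EuclideanSpace ℝ (Fin d) :=
  LinearMap.toContinuousLinearMap
    { toFun := fun w => Tmap w y
      map_add' := fun w w' => Tmap_add_left w w' y
      map_smul' := fun c w => Tmap_smul_left c w y }

theorem tmapCLM_apply (y : EuclideanSpace ℝ (Fin d))
    (w : EuclideanSpace ℝ (Fin d ⊕ Fin d × Fin d)) : tmapCLM y w = Tmap w y :=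
  rfl

theorem adjoint_tmapCLM_apply (y r : EuclideanSpace ℝ (Fin d)) :
    ContinuousLinearMap.adjoint (tmapCLM y) r
      = WithLp.toLp 2 (Sum.elim (⇑r) fun p => r p.1 * y p.2) := by
  refine ext_inner_right ℝ fun v => ?_
  rw [ContinuousLinearMap.adjoint_inner_left]
  simp only [tmapCLM_apply, Tmap, WithLp.equiv_symm_apply, PiLp.inner_apply, RCLike.inner_apply,
    conj_trivial, Fintype.sum_sum_type, Fintype.sum_prod_type, Sum.elim_inl, Sum.elim_inr,
    add_mul, Finset.sum_add_distrib, Finset.sum_mul]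
  rw [add_comm]
  congr 1
  exact Finset.sum_congr rfl fun _ _ => Finset.sum_congr rfl fun _ _ => by ring

theorem norm_sq_toLp_sum_elim_mul (y r : EuclideanSpace ℝ (Fin d)) :
    ‖(WithLp.toLp 2 (Sum.elim (⇑r) fun p => r p.1 * y p.2) :
      EuclideanSpace ℝ (Fin d ⊕ Fin d × Fin d))‖ ^ 2 = ‖r‖ ^ 2 * (1 + ‖y‖ ^ 2) := by
  simp only [EuclideanSpace.norm_sq_eq, Real.norm_eq_abs, sq_abs, Fintype.sum_sum_type,
    Sum.elim_inl, Sum.elim_inr, mul_pow, Fintype.sum_prod_type, mul_add, mul_one, Finset.mul_sum,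
    Finset.sum_mul, add_right_inj]
  exact Finset.sum_comm

theorem norm_sq_gradient_half_mul_norm_Tmap_sub_sq (M : ℝ) (zbar y : EuclideanSpace ℝ (Fin d))
    (w : EuclideanSpace ℝ (Fin d ⊕ Fin d × Fin d)) :
    ‖gradient (fun w => M / 2 * ‖Tmap w y - zbar‖ ^ 2) w‖ ^ 2
      = M ^ 2 * (‖Tmap w y - zbar‖ ^ 2 * (1 + ‖y‖ ^ 2)) := by
  have h := (hasGradientAt_const_mul_norm_sub_sq (tmapCLM y) zbar (M / 2) w).gradient
  simp only [tmapCLM_apply] at h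
  rw [h, norm_smul, mul_pow, adjoint_tmapCLM_apply, norm_sq_toLp_sum_elim_mul, Real.norm_eq_abs,
    sq_abs]
  ring

end Reparameterization

section QuadraticForm

variable {Ω ι ρ : Type*} [MeasurableSpace Ω] {μ : Measure Ω} [Fintype ι] [Fintype ρ]

theorem integral_sum_sq_sum_mul_eq_of_orthogonal {V : ι → Ω → ℝ} {W : Ω → ℝ} {c : ι → ℝ}
    (hint : ∀ o o', Integrable (fun ω => V o ω * V o' ω * W ω) μ)
    (hdiag : ∀ o, ∫ ω, V o ω * V o ω * W ω ∂μ = c o)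
    (hoff : ∀ o o', o ≠ o' → ∫ ω, V o ω * V o' ω * W ω ∂μ = 0) (D : ρ → ι → ℝ) :
    ∫ ω, ∑ i, (∑ o, D i o * V o ω) ^ 2 * W ω ∂μ = ∑ i, ∑ o, D i o ^ 2 * c o := by
  have hexpand : ∀ ω, ∑ i, (∑ o, D i o * V o ω) ^ 2 * W ω
      = ∑ i, ∑ o, ∑ o', D i o * D i o' * (V o ω * V o' ω * W ω) := fun ω => by
    simp only [sq, Finset.sum_mul_sum]
    simp only [Finset.sum_mul]
    exact Finset.sum_congr rfl fun _ _ => Finset.sum_congr rfl fun _ _ =>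
      Finset.sum_congr rfl fun _ _ => by ring
  have hint' : ∀ i o o', Integrable (fun ω => D i o * D i o' * (V o ω * V o' ω * W ω)) μ :=
    fun i o o' => (hint o o').const_mul _
  simp_rw [hexpand]
  rw [integral_finsetSum _ fun i _ => integrable_finsetSum _ fun o _ =>
    integrable_finsetSum _ fun o' _ => hint' i o o']
  refine Finset.sum_congr rfl fun i _ => ?_
  rw [integral_finsetSum _ fun o _ => integrable_finsetSum _ fun o' _ => hint' i o o']
  refine Finset.sum_congr rfl fun o _ => ?_
  rw [integral_finsetSum _ fun o' _ => hint' i o o', Finset.sum_eq_single o]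
  · rw [integral_const_mul, hdiag, sq]
  · intro o' _ ho'
    rw [integral_const_mul, hoff o o' (Ne.symm ho'), mul_zero]
  · simp

end QuadraticForm

theorem MeasureTheory.MemLp.mul_of_four {Ω : Type*} [MeasurableSpace Ω] {μ : Measure Ω}
    {f g : Ω → ℝ} (hf : MemLp f 4 μ) (hg : MemLp g 4 μ) :
    MemLp (fun ω => f ω * g ω) 2 μ :=
  have : ENNReal.HolderTriple 4 4 2 := ⟨by
    rw [← ENNReal.toReal_eq_toReal_iff' (by simp) (by simp)]
    norm_num [ENNReal.toReal_add]⟩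
  hg.mul' hf

theorem MeasureTheory.MemLp.sq_of_four {Ω : Type*} [MeasurableSpace Ω] {μ : Measure Ω}
    {f : Ω → ℝ} (hf : MemLp f 4 μ) : MemLp (fun ω => f ω ^ 2) 2 μ := by
  simpa only [sq] using hf.mul_of_four hf

namespace ProbabilityTheory.iIndepFun

variable {Ω ι : Type*} [MeasurableSpace Ω] {μ : Measure Ω} {X : ι → Ω → ℝ}

theorem integral_mul_eq_zero_of_ne (hindep : iIndepFun X μ)
    (hX : ∀ i, AEStronglyMeasurable (X i) μ) (hmean : ∀ i, ∫ ω, X i ω ∂μ = 0) {i j : ι}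
    (hij : i ≠ j) : ∫ ω, X i ω * X j ω ∂μ = 0 := by
  rw [(hindep.indepFun hij).integral_fun_mul_eq_mul_integral (hX i) (hX j), hmean i, zero_mul]

theorem integral_mul_pow_eq_zero_of_ne (hindep : iIndepFun X μ)
    (hX : ∀ i, AEStronglyMeasurable (X i) μ) (hmean : ∀ i, ∫ ω, X i ω ∂μ = 0) {i k : ι}
    (hik : i ≠ k) (n : ℕ) : ∫ ω, X i ω * X k ω ^ n ∂μ = 0 := by
  have hind : IndepFun (X i) (fun ω => X k ω ^ n) μ :=
    (hindep.indepFun hik).comp measurable_id (measurable_id.pow_const n)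
  rw [hind.integral_fun_mul_eq_mul_integral (hX i) ((hX k).pow n), hmean i, zero_mul]

theorem integral_mul_sq_eq_zero (hindep : iIndepFun X μ)
    (hX : ∀ i, AEStronglyMeasurable (X i) μ) (hmean : ∀ i, ∫ ω, X i ω ∂μ = 0)
    (hthird : ∀ i, ∫ ω, X i ω ^ 3 ∂μ = 0) (i k : ι) : ∫ ω, X i ω * X k ω ^ 2 ∂μ = 0 := by
  by_cases hik : i = k
  · subst hik
    simpa only [← pow_succ'] using hthird i
  · exact hindep.integral_mul_pow_eq_zero_of_ne hX hmean hik 2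

theorem integral_sq_mul_sq_of_ne (hindep : iIndepFun X μ)
    (hX : ∀ i, AEStronglyMeasurable (X i) μ) (hvar : ∀ i, ∫ ω, X i ω ^ 2 ∂μ = 1) {i k : ι}
    (hik : i ≠ k) : ∫ ω, X i ω ^ 2 * X k ω ^ 2 ∂μ = 1 := by
  have hind : IndepFun (fun ω => X i ω ^ 2) (fun ω => X k ω ^ 2) μ :=
    (hindep.indepFun hik).comp (measurable_id.pow_const 2) (measurable_id.pow_const 2)
  rw [hind.integral_fun_mul_eq_mul_integral ((hX i).pow 2) ((hX k).pow 2), hvar i, hvar k,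
    one_mul]

theorem integral_mul_mul_sq_eq_zero_of_ne (hindep : iIndepFun X μ)
    (hX : ∀ i, AEStronglyMeasurable (X i) μ) (hmean : ∀ i, ∫ ω, X i ω ∂μ = 0) {i j : ι}
    (hij : i ≠ j) (k : ι) : ∫ ω, X i ω * X j ω * X k ω ^ 2 ∂μ = 0 := by
  by_cases hki : k = i
  · subst hki
    simp_rw [show ∀ ω, X k ω * X j ω * X k ω ^ 2 = X j ω * X k ω ^ 3 from fun ω => by ring]
    exact hindep.integral_mul_pow_eq_zero_of_ne hX hmean (Ne.symm hij) 3
  by_cases hkj : k = j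
  · subst hkj
    simp_rw [show ∀ ω, X i ω * X k ω * X k ω ^ 2 = X i ω * X k ω ^ 3 from fun ω => by ring]
    exact hindep.integral_mul_pow_eq_zero_of_ne hX hmean hij 3
  have hind : IndepFun (fun ω => X i ω * X j ω) (fun ω => X k ω ^ 2) μ :=
    (hindep.indepFun_prodMk₀ (fun i => (hX i).aemeasurable) i j k (Ne.symm hki)
      (Ne.symm hkj)).comp (measurable_fst.mul measurable_snd) (measurable_id.pow_const 2)
  rw [hind.integral_fun_mul_eq_mul_integral ((hX i).mul (hX j)) ((hX k).pow 2),
    hindep.integral_mul_eq_zero_of_ne hX hmean hij, zero_mul]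

end ProbabilityTheory.iIndepFun

section WeightedMoments

variable {Ω ι : Type*} [MeasurableSpace Ω] {μ : Measure Ω} [Fintype ι] {X : ι → Ω → ℝ}

theorem memLp_one_add_sum_sq [IsFiniteMeasure μ] (hX : ∀ k, MemLp (X k) 4 μ) :
    MemLp (fun ω => 1 + ∑ k, X k ω ^ 2) 2 μ := by
  have hsum : MemLp (fun ω => ∑ k, X k ω ^ 2) 2 μ :=
    memLp_finsetSum _ fun k _ => (hX k).sq_of_four
  exact (memLp_const (1 : ℝ)).add hsum

theorem integral_mul_one_add_sum_sq [IsFiniteMeasure μ] {f : Ω → ℝ} (hf : MemLp f 2 μ)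
    (hX : ∀ k, MemLp (X k) 4 μ) :
    ∫ ω, f ω * (1 + ∑ k, X k ω ^ 2) ∂μ = ∫ ω, f ω ∂μ + ∑ k, ∫ ω, f ω * X k ω ^ 2 ∂μ := by
  have hint : ∀ k, Integrable (fun ω => f ω * X k ω ^ 2) μ := fun k =>
    hf.integrable_mul (hX k).sq_of_four
  simp_rw [mul_add, mul_one, Finset.mul_sum]
  rw [integral_add (hf.integrable one_le_two) (integrable_finsetSum _ fun k _ => hint k),
    integral_finsetSum _ fun k _ => hint k]

theorem integral_one_add_sum_sq [IsProbabilityMeasure μ] (hX : ∀ k, MemLp (X k) 4 μ)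
    (hvar : ∀ i, ∫ ω, X i ω ^ 2 ∂μ = 1) :
    ∫ ω, (1 + ∑ k, X k ω ^ 2) ∂μ = Fintype.card ι + 1 := by
  simpa [hvar, add_comm] using integral_mul_one_add_sum_sq (f := fun _ => 1) (memLp_const 1) hX

namespace ProbabilityTheory.iIndepFun

theorem integral_mul_one_add_sum_sq [IsFiniteMeasure μ] (hindep : iIndepFun X μ)
    (hX : ∀ k, MemLp (X k) 4 μ) (hmean : ∀ i, ∫ ω, X i ω ∂μ = 0)
    (hthird : ∀ i, ∫ ω, X i ω ^ 3 ∂μ = 0) (j : ι) :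
    ∫ ω, X j ω * (1 + ∑ k, X k ω ^ 2) ∂μ = 0 := by
  rw [_root_.integral_mul_one_add_sum_sq ((hX j).mono_exponent (by norm_num)) hX, hmean j,
    Finset.sum_eq_zero fun k _ =>
      hindep.integral_mul_sq_eq_zero (fun i => (hX i).aestronglyMeasurable) hmean hthird j k,
    add_zero]

theorem integral_mul_mul_one_add_sum_sq_of_ne [IsFiniteMeasure μ] (hindep : iIndepFun X μ)
    (hX : ∀ k, MemLp (X k) 4 μ) (hmean : ∀ i, ∫ ω, X i ω ∂μ = 0) {j l : ι} (hjl : j ≠ l) :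
    ∫ ω, X j ω * X l ω * (1 + ∑ k, X k ω ^ 2) ∂μ = 0 := by
  have hX' : ∀ i, AEStronglyMeasurable (X i) μ := fun i => (hX i).aestronglyMeasurable
  rw [_root_.integral_mul_one_add_sum_sq ((hX j).mul_of_four (hX l)) hX,
    hindep.integral_mul_eq_zero_of_ne hX' hmean hjl,
    Finset.sum_eq_zero fun k _ => hindep.integral_mul_mul_sq_eq_zero_of_ne hX' hmean hjl k,
    add_zero]

theorem integral_mul_self_mul_one_add_sum_sq [IsFiniteMeasure μ] (hindep : iIndepFun X μ)
    (hX : ∀ k, MemLp (X k) 4 μ) (hvar : ∀ i, ∫ ω, X i ω ^ 2 ∂μ = 1) {κ : ℝ}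
    (hfourth : ∀ i, ∫ ω, X i ω ^ 4 ∂μ = κ) (j : ι) :
    ∫ ω, X j ω * X j ω * (1 + ∑ k, X k ω ^ 2) ∂μ = Fintype.card ι + κ := by
  classical
  have hX' : ∀ i, AEStronglyMeasurable (X i) μ := fun i => (hX i).aestronglyMeasurable
  have hterm : ∀ k, ∫ ω, X j ω * X j ω * X k ω ^ 2 ∂μ = 1 + if k = j then κ - 1 else 0 := by
    intro k
    simp_rw [← sq]
    split_ifs with hkj
    · subst hkj
      simp_rw [← pow_add]
      rw [hfourth]
      ring
    · rw [hindep.integral_sq_mul_sq_of_ne hX' hvar (Ne.symm hkj), add_zero]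
  rw [_root_.integral_mul_one_add_sum_sq ((hX j).mul_of_four (hX j)) hX]
  simp_rw [hterm, ← sq, hvar, Finset.sum_add_distrib, Finset.sum_ite_eq']
  simp only [Finset.sum_const, Finset.card_univ, nsmul_eq_mul, mul_one, Finset.mem_univ,
    if_true]
  ring

theorem integral_sum_sq_affine_mul_one_add_sum_sq [IsProbabilityMeasure μ] {ρ : Type*}
    [Fintype ρ] (hindep : iIndepFun X μ) (hX : ∀ k, MemLp (X k) 4 μ)
    (hmean : ∀ i, ∫ ω, X i ω ∂μ = 0) (hthird : ∀ i, ∫ ω, X i ω ^ 3 ∂μ = 0)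
    (hvar : ∀ i, ∫ ω, X i ω ^ 2 ∂μ = 1) {κ : ℝ} (hfourth : ∀ i, ∫ ω, X i ω ^ 4 ∂μ = κ)
    (a : ρ → ℝ) (C : ρ → ι → ℝ) :
    ∫ ω, ∑ i, (a i + ∑ j, C i j * X j ω) ^ 2 * (1 + ∑ k, X k ω ^ 2) ∂μ
      = (Fintype.card ι + 1) * ∑ i, a i ^ 2 + (Fintype.card ι + κ) * ∑ i, ∑ j, C i j ^ 2 := by
  set V : Option ι → Ω → ℝ := fun o => o.elim 1 X
  have hV : ∀ o, MemLp (V o) 4 μ := by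
    rintro (_ | j)
    exacts [memLp_const 1, hX j]
  have hint : ∀ o o', Integrable (fun ω => V o ω * V o' ω * (1 + ∑ k, X k ω ^ 2)) μ :=
    fun o o' => ((hV o).mul_of_four (hV o')).integrable_mul (memLp_one_add_sum_sq hX)
  have hdiag : ∀ o, ∫ ω, V o ω * V o ω * (1 + ∑ k, X k ω ^ 2) ∂μ
      = o.elim ((Fintype.card ι : ℝ) + 1) fun _ => (Fintype.card ι : ℝ) + κ := by
    rintro (_ | j)
    · simpa [V] using integral_one_add_sum_sq hX hvar
    · exact hindep.integral_mul_self_mul_one_add_sum_sq hX hvar hfourth j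
  have hoff : ∀ o o', o ≠ o' → ∫ ω, V o ω * V o' ω * (1 + ∑ k, X k ω ^ 2) ∂μ = 0 := by
    rintro (_ | j) (_ | l) h
    · exact absurd rfl h
    · simpa [V] using hindep.integral_mul_one_add_sum_sq hX hmean hthird l
    · simpa [V] using hindep.integral_mul_one_add_sum_sq hX hmean hthird j
    · exact hindep.integral_mul_mul_one_add_sum_sq_of_ne hX hmean fun hjl => h (congrArg some hjl)
  have hrow : ∀ i ω, a i + ∑ j, C i j * X j ω = ∑ o, o.elim (a i) (C i) * V o ω := by
    simp [V, Fintype.sum_option]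
  simp_rw [hrow]
  rw [integral_sum_sq_sum_mul_eq_of_orthogonal hint hdiag hoff]
  rw [Finset.mul_sum, Finset.mul_sum, ← Finset.sum_add_distrib]
  refine Finset.sum_congr rfl fun i _ => ?_
  simp only [Fintype.sum_option, Option.elim_none, Option.elim_some]
  rw [← Finset.sum_mul]
  ring

end ProbabilityTheory.iIndepFun

end WeightedMoments

theorem stmt_9_general {Ω : Type*} [MeasurableSpace Ω] (μ : Measure Ω) [IsProbabilityMeasure μ]
    (d : ℕ) (hd : 0 < d) (u : Ω → EuclideanSpace ℝ (Fin d))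
    (hindep : iIndepFun (fun i ω => u ω i) μ)
    (hident : ∀ i j : Fin d, IdentDistrib (fun ω => u ω i) (fun ω => u ω j) μ μ)
    (hmean : ∀ i, ∫ ω, u ω i ∂μ = 0)
    (hthird : ∀ i, ∫ ω, u ω i ^ 3 ∂μ = 0)
    (hvar : ∀ i, ∫ ω, u ω i ^ 2 ∂μ = 1)
    (hL4 : ∀ i, MemLp (fun ω => u ω i) 4 μ)
    (κ : ℝ) (hκ : κ = ∫ ω, u ω ⟨0, hd⟩ ^ 4 ∂μ)
    (M : ℝ) (zbar : EuclideanSpace ℝ (Fin d))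
    (f : EuclideanSpace ℝ (Fin d) → ℝ) (hf : f = fun z => M / 2 * ‖z - zbar‖ ^ 2)
    (m : EuclideanSpace ℝ (Fin d)) (C : Matrix (Fin d) (Fin d) ℝ) :
    ∫ ω, ‖gradient (fun w' => f (Tmap w' (u ω))) (param m C)‖ ^ 2 ∂μ
      = M ^ 2 * (((d : ℝ) + 1) * ‖m - zbar‖ ^ 2 + ((d : ℝ) + κ) * ∑ i, ∑ j, C i j ^ 2) := by
  subst hf hκ
  have hfourth : ∀ i, ∫ ω, u ω i ^ 4 ∂μ = ∫ ω, u ω ⟨0, hd⟩ ^ 4 ∂μ := fun i =>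
    ((hident i ⟨0, hd⟩).comp (measurable_id.pow_const 4)).integral_eq
  have hpoint : ∀ ω, ‖gradient (fun w => M / 2 * ‖Tmap w (u ω) - zbar‖ ^ 2) (param m C)‖ ^ 2
      = M ^ 2 * ∑ i, ((m i - zbar i) + ∑ j, C i j * u ω j) ^ 2 * (1 + ∑ k, u ω k ^ 2) := by
    intro ω
    rw [norm_sq_gradient_half_mul_norm_Tmap_sub_sq, EuclideanSpace.norm_sq_eq,
      EuclideanSpace.norm_sq_eq, Finset.sum_mul]
    simp [Tmap, param, add_sub_right_comm, add_comm]
  have hmoment := hindep.integral_sum_sq_affine_mul_one_add_sum_sq hL4 hmean hthird hvar hfourth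
    (fun i => m i - zbar i) C
  simp only [Fintype.card_fin] at hmoment
  simp_rw [hpoint]
  rw [integral_const_mul, hmoment, EuclideanSpace.norm_sq_eq]
  simp

/-- for the quadratic `f(z) = (M/2)‖z − z̄‖₂²` and `u ∼ s` standardized with
fourth moment `κ`, the estimator `g = ∇_w f(T_w(u))` attains the smooth-case bound with
equality: `E‖g‖₂² = M²((d+1)‖m − z̄‖₂² + (d+κ)‖C‖_F²)`; hence the bound is unimprovable. -/
theorem stmt_9 {Ω : Type*} [MeasurableSpace Ω] (μ : Measure Ω) [IsProbabilityMeasure μ]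
    (d : ℕ) (hd : 0 < d) (u : Ω → EuclideanSpace ℝ (Fin d))
    (hmeas : ∀ i, Measurable fun ω => u ω i)
    (hindep : iIndepFun (fun i ω => u ω i) μ)
    (hident : ∀ i j : Fin d, IdentDistrib (fun ω => u ω i) (fun ω => u ω j) μ μ)
    (hmean : ∀ i, ∫ ω, u ω i ∂μ = 0)
    (hthird : ∀ i, ∫ ω, u ω i ^ 3 ∂μ = 0)
    (hvar : ∀ i, ∫ ω, u ω i ^ 2 ∂μ = 1)
    (hL4 : ∀ i, MemLp (fun ω => u ω i) 4 μ)
    (κ : ℝ) (hκ : κ = ∫ ω, u ω ⟨0, hd⟩ ^ 4 ∂μ)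
    (M : ℝ) (hM : 0 ≤ M) (zbar : EuclideanSpace ℝ (Fin d))
    (f : EuclideanSpace ℝ (Fin d) → ℝ) (hf : f = fun z => M / 2 * ‖z - zbar‖ ^ 2)
    (m : EuclideanSpace ℝ (Fin d)) (C : Matrix (Fin d) (Fin d) ℝ) :
    ∫ ω, ‖gradient (fun w' => f (Tmap w' (u ω))) (param m C)‖ ^ 2 ∂μ
      = M ^ 2 * (((d : ℝ) + 1) * ‖m - zbar‖ ^ 2 + ((d : ℝ) + κ) * ∑ i, ∑ j, C i j ^ 2) :=
  stmt_9_general μ d hd u hindep hident hmean hthird hvar hL4 κ hκ M zbar f hf m C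
end
end

section
/- Let M ∈ ℝ^{d×d} be symmetric positive semidefinite, let z̄ ∈ ℝ^d, and let f(z) = (1/2)(z − z̄)ᵀ M (z − z̄). Then f is M-matrix-smooth with equality, i.e. ‖∇f(y) − ∇f(z)‖₂ = ‖M(y − z)‖₂ for all y, z; and if u ∼ s is standardized with fourth moment κ = E[u₁⁴] < ∞, T_w(u) = Cu + m, and g = ∇_w f(T_w(u)) with respect to all d + d² parameters w = (m, C), then E‖g‖₂² = (d+1) ‖M(m − z̄)‖₂² + (d+κ) ‖MC‖_F²; hence the matrix-smoothness upper bound on E‖g‖₂² is unimprovable. -/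
noncomputable section

open MeasureTheory ProbabilityTheory
open scoped RealInnerProductSpace

section aux
open scoped ENNReal
variable {d : ℕ}

theorem quad_grad (M : Matrix (Fin d) (Fin d) ℝ) (hM : M.IsHermitian)
    (zbar y : EuclideanSpace ℝ (Fin d)) :
    HasGradientAt (fun z => (1/2 : ℝ) * ⟪z - zbar, Matrix.toEuclideanLin M (z - zbar)⟫)
      (Matrix.toEuclideanLin M (y - zbar)) y := by
  set L : EuclideanSpace ℝ (Fin d) →L[ℝ] EuclideanSpace ℝ (Fin d) :=
    LinearMap.toContinuousLinearMap (Matrix.toEuclideanLin M) with hL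
  have hsym : ∀ x w : EuclideanSpace ℝ (Fin d), ⟪L x, w⟫ = ⟪x, L w⟫ :=
    Matrix.isHermitian_iff_isSymmetric.mp hM
  have h1 : HasFDerivAt (fun z : EuclideanSpace ℝ (Fin d) => z - zbar)
      (ContinuousLinearMap.id ℝ _) y := (hasFDerivAt_id y).sub_const zbar
  have h2 : HasFDerivAt (fun z : EuclideanSpace ℝ (Fin d) => L (z - zbar)) L y :=
    L.hasFDerivAt.comp y h1
  have h3 := (h1.inner ℝ h2).const_mul (1/2 : ℝ)
  rw [hasGradientAt_iff_hasFDerivAt]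
  refine h3.congr_fderiv ?_
  symm
  refine ContinuousLinearMap.ext fun (h : EuclideanSpace ℝ (Fin d)) => ?_
  have e1 : (⟪L (y - zbar), h⟫ : ℝ) = ⟪y - zbar, L h⟫ := hsym _ _
  have e2 : (⟪h, L (y - zbar)⟫ : ℝ) = ⟪L (y - zbar), h⟫ := real_inner_comm _ _
  show (⟪L (y - zbar), h⟫ : ℝ) = ((1/2 : ℝ) •
      ((fderivInnerCLM ℝ (y - zbar, L (y - zbar))).comp
        ((ContinuousLinearMap.id ℝ (EuclideanSpace ℝ (Fin d))).prod L))) h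
  simp only [ContinuousLinearMap.coe_smul', Pi.smul_apply, ContinuousLinearMap.coe_comp',
    Function.comp_apply, ContinuousLinearMap.prod_apply, ContinuousLinearMap.coe_id', id_eq,
    fderivInnerCLM_apply, smul_eq_mul]
  rw [e2, e1]; ring


lemma norm_sq_euclid {ι : Type*} [Fintype ι] (x : EuclideanSpace ℝ ι) :
    ‖x‖ ^ 2 = ∑ i, x i ^ 2 := by
  rw [EuclideanSpace.norm_eq, Real.sq_sqrt (by positivity)]
  simp [sq_abs]

def Tlin (u0 : EuclideanSpace ℝ (Fin d)) :
    EuclideanSpace ℝ (Fin d ⊕ Fin d × Fin d) →L[ℝ] EuclideanSpace ℝ (Fin d) :=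
  LinearMap.toContinuousLinearMap
  { toFun := fun w => Tmap w u0
    map_add' := by
      intro w w'
      ext i
      simp [Tmap, Finset.sum_add_distrib, add_mul]
      ring
    map_smul' := by
      intro c w
      ext i
      simp [Tmap, Finset.mul_sum, mul_add]
      ring_nf }

@[simp] lemma Tlin_apply (u0 w) : Tlin (d := d) u0 w = Tmap w u0 := rfl

def Gvec (v u0 : EuclideanSpace ℝ (Fin d)) : EuclideanSpace ℝ (Fin d ⊕ Fin d × Fin d) :=
  (WithLp.equiv 2 _).symm (Sum.elim (fun i => v i) fun p => v p.1 * u0 p.2)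

lemma comp_grad (f : EuclideanSpace ℝ (Fin d) → ℝ) (u0 : EuclideanSpace ℝ (Fin d))
    (w : EuclideanSpace ℝ (Fin d ⊕ Fin d × Fin d)) (v : EuclideanSpace ℝ (Fin d))
    (hf : HasGradientAt f v (Tmap w u0)) :
    HasGradientAt (fun w' => f (Tmap w' u0)) (Gvec v u0) w := by
  rw [hasGradientAt_iff_hasFDerivAt] at hf ⊢
  have h := hf.comp w (Tlin u0).hasFDerivAt
  refine h.congr_fderiv ?_
  symm
  refine ContinuousLinearMap.ext fun (h' : EuclideanSpace ℝ (Fin d ⊕ Fin d × Fin d)) => ?_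
  show ⟪Gvec v u0, h'⟫ = ⟪v, Tmap h' u0⟫
  simp only [Gvec, Tmap, PiLp.inner_apply, RCLike.inner_apply, conj_trivial,
    WithLp.equiv_symm_apply, PiLp.toLp_apply, Fintype.sum_sum_type, Fintype.sum_prod_type, Sum.elim_inl,
    Sum.elim_inr, mul_add, Finset.sum_add_distrib, Finset.mul_sum]
  ring_nf
  rw [Finset.sum_add_distrib, add_comm]
  congr 1
  exact Finset.sum_congr rfl fun i _ => by
    rw [Finset.sum_mul]; exact Finset.sum_congr rfl fun j _ => by ring

lemma norm_Gvec_sq (v u0 : EuclideanSpace ℝ (Fin d)) :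
    ‖Gvec v u0‖ ^ 2 = (∑ i, v i ^ 2) * (1 + ∑ j, u0 j ^ 2) := by
  rw [norm_sq_euclid]
  simp only [Gvec, WithLp.equiv_symm_apply, PiLp.toLp_apply, Fintype.sum_sum_type, Fintype.sum_prod_type,
    Sum.elim_inl, Sum.elim_inr, mul_pow]
  rw [mul_add, mul_one, Finset.sum_mul]
  congr 1
  exact Finset.sum_congr rfl fun i _ => by rw [Finset.mul_sum]


variable {Ω : Type*} [MeasurableSpace Ω] {μ : Measure Ω} [IsProbabilityMeasure μ]

lemma memLp_mul {f g : Ω → ℝ} {p q r : ℝ≥0∞} (hf : MemLp f q μ) (hg : MemLp g r μ)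
    (h : 1/p = 1/q + 1/r) : MemLp (fun ω => f ω * g ω) p μ := by
  have : ENNReal.HolderTriple q r p := ⟨by simpa only [one_div] using h.symm⟩
  exact hg.smul hf

lemma e24 : (1 : ℝ≥0∞)/2 = 1/4 + 1/4 := by
  rw [ENNReal.div_add_div_same]
  refine (ENNReal.div_eq_div_iff ?_ ?_ ?_ ?_).mpr ?_ <;> norm_num

lemma e12 : (1 : ℝ≥0∞)/1 = 1/2 + 1/2 := by
  rw [ENNReal.div_add_div_same]
  refine (ENNReal.div_eq_div_iff ?_ ?_ ?_ ?_).mpr ?_ <;> norm_num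

variable {d : ℕ} {u : Ω → EuclideanSpace ℝ (Fin d)}

section moments
variable (hmeas : ∀ i, Measurable fun ω => u ω i)
  (hindep : iIndepFun (fun i ω => u ω i) μ)
  (hmean : ∀ i, ∫ ω, u ω i ∂μ = 0)
  (hthird : ∀ i, ∫ ω, u ω i ^ 3 ∂μ = 0)
  (hvar : ∀ i, ∫ ω, u ω i ^ 2 ∂μ = 1)
  (hL4 : ∀ i, MemLp (fun ω => u ω i) 4 μ)

include hL4

lemma U2 (l : Fin d) : MemLp (fun ω => u ω l ^ 2) 2 μ := by
  simpa [pow_two] using memLp_mul (hL4 l) (hL4 l) e24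

lemma int_u (j : Fin d) : Integrable (fun ω => u ω j) μ :=
  (hL4 j).integrable (by norm_num)

lemma int_u2 (l : Fin d) : Integrable (fun ω => u ω l ^ 2) μ :=
  (U2 hL4 l).integrable (by norm_num)

lemma int_uu (j k : Fin d) : Integrable (fun ω => u ω j * u ω k) μ :=
  memLp_one_iff_integrable.mp (memLp_mul ((hL4 j).mono_exponent (by norm_num))
    ((hL4 k).mono_exponent (by norm_num)) e12)

lemma int_u3 (j : Fin d) : Integrable (fun ω => u ω j ^ 3) μ := by
  have h : (fun ω => u ω j ^ 3) = fun ω => u ω j ^ 2 * u ω j := by funext ω; ring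
  rw [h]
  exact memLp_one_iff_integrable.mp
    (memLp_mul (U2 hL4 j) ((hL4 j).mono_exponent (by norm_num)) e12)

lemma int_uul (j k l : Fin d) : Integrable (fun ω => u ω j * u ω k * u ω l ^ 2) μ :=
  memLp_one_iff_integrable.mp (memLp_mul (memLp_mul (hL4 j) (hL4 k) e24) (U2 hL4 l) e12)

lemma int_ul2 (j l : Fin d) : Integrable (fun ω => u ω j * u ω l ^ 2) μ :=
  memLp_one_iff_integrable.mp (memLp_mul ((hL4 j).mono_exponent (by norm_num))
    (U2 hL4 l) e12)
end moments


section moments2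
variable (hmeas : ∀ i, Measurable fun ω => u ω i)
  (hindep : iIndepFun (fun i ω => u ω i) μ)
  (hmean : ∀ i, ∫ ω, u ω i ∂μ = 0)
  (hthird : ∀ i, ∫ ω, u ω i ^ 3 ∂μ = 0)
  (hvar : ∀ i, ∫ ω, u ω i ^ 2 ∂μ = 1)
  (hL4 : ∀ i, MemLp (fun ω => u ω i) 4 μ)

include hindep hmean hL4 in
lemma mom2 (j k : Fin d) (hjk : j ≠ k) : ∫ ω, u ω j * u ω k ∂μ = 0 := by
  have h := (hindep.indepFun hjk).integral_fun_mul_eq_mul_integral (int_u hL4 j).1 (int_u hL4 k).1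
  rw [hmean j, zero_mul] at h
  exact h

include hindep hmean hthird hL4 in
lemma mom3 (j l : Fin d) : ∫ ω, u ω j * u ω l ^ 2 ∂μ = 0 := by
  rcases eq_or_ne j l with rfl | hjl
  · rw [show (fun ω => u ω j * u ω j ^ 2) = fun ω => u ω j ^ 3 from funext fun ω => by ring]
    exact hthird j
  · have hi : IndepFun (fun ω => u ω j) (fun ω => u ω l ^ 2) μ :=
      (hindep.indepFun hjl).comp measurable_id (measurable_id.pow_const 2)
    have h := hi.integral_fun_mul_eq_mul_integral (int_u hL4 j).1 (int_u2 hL4 l).1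
    rw [hmean j, zero_mul] at h
    exact h

include hindep hvar hL4 in
lemma mom22 (j l : Fin d) (hjl : j ≠ l) : ∫ ω, u ω j ^ 2 * u ω l ^ 2 ∂μ = 1 := by
  have hi : IndepFun (fun ω => u ω j ^ 2) (fun ω => u ω l ^ 2) μ :=
    (hindep.indepFun hjl).comp (measurable_id.pow_const 2) (measurable_id.pow_const 2)
  have h := hi.integral_fun_mul_eq_mul_integral (int_u2 hL4 j).1 (int_u2 hL4 l).1
  rw [hvar j, hvar l, one_mul] at h
  exact h

include hmeas hindep hmean hthird hL4 in
lemma mom4 (j k l : Fin d) (hjk : j ≠ k) : ∫ ω, u ω j * u ω k * u ω l ^ 2 ∂μ = 0 := by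
  rcases eq_or_ne l j with rfl | hlj
  · rw [show (fun ω => u ω l * u ω k * u ω l ^ 2) = fun ω => u ω l ^ 3 * u ω k
      from funext fun ω => by ring]
    have hi : IndepFun (fun ω => u ω l ^ 3) (fun ω => u ω k) μ :=
      (hindep.indepFun hjk).comp (measurable_id.pow_const 3) measurable_id
    have h := hi.integral_fun_mul_eq_mul_integral (int_u3 hL4 l).1 (int_u hL4 k).1
    rw [hthird l, zero_mul] at h
    exact h
  rcases eq_or_ne l k with rfl | hlk
  · rw [show (fun ω => u ω j * u ω l * u ω l ^ 2) = fun ω => u ω j * u ω l ^ 3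
      from funext fun ω => by ring]
    have hi : IndepFun (fun ω => u ω j) (fun ω => u ω l ^ 3) μ :=
      (hindep.indepFun hjk).comp measurable_id (measurable_id.pow_const 3)
    have h := hi.integral_fun_mul_eq_mul_integral (int_u hL4 j).1 (int_u3 hL4 l).1
    rw [hmean j, zero_mul] at h
    exact h
  · set g : Fin d → Ω → ℝ := fun i => if i = l then (fun ω => u ω i ^ 2) else fun ω => u ω i
      with hg
    have hgind : iIndepFun g μ := by
      have := hindep.comp (fun i => if i = l then (fun x : ℝ => x ^ 2) else id)
        (fun i => by split <;> [exact measurable_id.pow_const 2; exact measurable_id])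
      convert this using 1
      funext i
      rcases eq_or_ne i l with rfl | h
      · simp only [hg, if_pos]; rfl
      · simp only [hg, if_neg h]; rfl
    have hgmeas : ∀ i, Measurable (g i) := fun i => by
      rcases eq_or_ne i l with rfl | h
      · simpa [hg] using (hmeas i).pow_const 2
      · simpa [hg, h] using hmeas i
    have hi : IndepFun (fun ω => u ω j) (fun ω => u ω k * u ω l ^ 2) μ := by
      have h2 := hgind.indepFun_mul_right hgmeas j k l hjk (Ne.symm hlj)
      have hk : g k = fun ω => u ω k := by simp [hg, Ne.symm hlk]
      have hl : g l = fun ω => u ω l ^ 2 := by simp [hg]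
      have hj : g j = fun ω => u ω j := by simp [hg, Ne.symm hlj]
      rw [hj, hk, hl] at h2
      exact h2
    have h := hi.integral_fun_mul_eq_mul_integral (int_u hL4 j).1 (int_ul2 hL4 k l).1
    rw [hmean j, zero_mul] at h
    rw [show (fun ω => u ω j * u ω k * u ω l ^ 2) = fun ω => u ω j * (u ω k * u ω l ^ 2)
      from funext fun ω => by ring]
    exact h
end moments2

section integrals
variable (hmeas : ∀ i, Measurable fun ω => u ω i)
  (hindep : iIndepFun (fun i ω => u ω i) μ)
  (hmean : ∀ i, ∫ ω, u ω i ∂μ = 0)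
  (hthird : ∀ i, ∫ ω, u ω i ^ 3 ∂μ = 0)
  (hvar : ∀ i, ∫ ω, u ω i ^ 2 ∂μ = 1)
  (hL4 : ∀ i, MemLp (fun ω => u ω i) 4 μ)
  (κ : ℝ) (hκ4 : ∀ l, ∫ ω, u ω l ^ 4 ∂μ = κ)
  (a : Fin d → ℝ) (B : Fin d → Fin d → ℝ)

include hL4 in
lemma memT4 (i : Fin d) : MemLp (fun ω => a i + ∑ j, B i j * u ω j) 4 μ :=
  (memLp_const (a i)).add (memLp_finset_sum _ fun j _ => ((hL4 j).const_mul (B i j)))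

include hL4 in
lemma intT2 (i : Fin d) : Integrable (fun ω => (∑ j, B i j * u ω j) ^ 2) μ :=
  MemLp.integrable_sq (memLp_finset_sum _ fun j _ =>
    (((hL4 j).mono_exponent (by norm_num)).const_mul (B i j)))

include hindep hmean hvar hL4 in
lemma IA (i : Fin d) :
    ∫ ω, (a i + ∑ j, B i j * u ω j) ^ 2 ∂μ = a i ^ 2 + ∑ j, B i j ^ 2 := by
  have hexp : (fun ω => (a i + ∑ j, B i j * u ω j) ^ 2)
      = fun ω => (a i ^ 2 + (∑ j, (2 * a i * B i j) * u ω j))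
          + ∑ j, ∑ k, (B i j * B i k) * (u ω j * u ω k) := by
    funext ω
    rw [add_sq, sq (∑ j, B i j * u ω j), Finset.sum_mul_sum]
    rw [Finset.mul_sum]
    congr 1
    · congr 1
      exact Finset.sum_congr rfl fun j _ => by ring
    · exact Finset.sum_congr rfl fun j _ => Finset.sum_congr rfl fun k _ => by ring
  rw [hexp]
  have i1 : Integrable (fun ω => a i ^ 2 + ∑ j, (2 * a i * B i j) * u ω j) μ :=
    (integrable_const _).add (integrable_finset_sum _ fun j _ => (int_u hL4 j).const_mul _)
  have i2 : Integrable (fun ω => ∑ j, ∑ k, (B i j * B i k) * (u ω j * u ω k)) μ :=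
    integrable_finset_sum _ fun j _ => integrable_finset_sum _ fun k _ =>
      (int_uu hL4 j k).const_mul _
  rw [integral_add i1 i2, integral_add (integrable_const _)
    (integrable_finset_sum _ fun j _ => (int_u hL4 j).const_mul _)]
  rw [integral_const, integral_finset_sum _ (fun j _ => (int_u hL4 j).const_mul _),
    integral_finset_sum _ (fun j _ => integrable_finset_sum _ fun k _ =>
      (int_uu hL4 j k).const_mul _)]
  simp only [integral_const_mul, hmean, mul_zero, Finset.sum_const_zero, measure_univ, probReal_univ,
    ENNReal.toReal_one, smul_eq_mul, one_mul, add_zero]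
  congr 1
  refine Finset.sum_congr rfl fun j _ => ?_
  rw [integral_finset_sum _ (fun k _ => (int_uu hL4 j k).const_mul _)]
  simp only [integral_const_mul]
  rw [Finset.sum_eq_single_of_mem j (Finset.mem_univ j)]
  · have h2 : ∫ ω, u ω j * u ω j ∂μ = 1 := by
      rw [show (fun ω => u ω j * u ω j) = fun ω => u ω j ^ 2 from funext fun ω => (sq _).symm]
      exact hvar j
    rw [h2]; ring
  · intro k _ hkj
    rw [mom2 hindep hmean hL4 j k (Ne.symm hkj), mul_zero]

include hmeas hindep hmean hthird hvar hL4 hκ4 in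
lemma IB (i l : Fin d) :
    ∫ ω, (a i + ∑ j, B i j * u ω j) ^ 2 * u ω l ^ 2 ∂μ
      = a i ^ 2 + ∑ j, B i j ^ 2 + (κ - 1) * B i l ^ 2 := by
  have hexp : (fun ω => (a i + ∑ j, B i j * u ω j) ^ 2 * u ω l ^ 2)
      = fun ω => (a i ^ 2 * u ω l ^ 2 + (∑ j, (2 * a i * B i j) * (u ω j * u ω l ^ 2)))
          + ∑ j, ∑ k, (B i j * B i k) * (u ω j * u ω k * u ω l ^ 2) := by
    funext ω
    rw [add_sq, add_mul, add_mul, sq (∑ j, B i j * u ω j), Finset.sum_mul_sum]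
    rw [Finset.mul_sum, Finset.sum_mul, Finset.sum_mul]
    congr 1
    · congr 1
      exact Finset.sum_congr rfl fun j _ => by ring
    · refine Finset.sum_congr rfl fun j _ => ?_
      rw [Finset.sum_mul]
      exact Finset.sum_congr rfl fun k _ => by ring
  rw [hexp]
  have i1 : Integrable (fun ω => a i ^ 2 * u ω l ^ 2
      + ∑ j, (2 * a i * B i j) * (u ω j * u ω l ^ 2)) μ :=
    ((int_u2 hL4 l).const_mul _).add
      (integrable_finset_sum _ fun j _ => (int_ul2 hL4 j l).const_mul _)
  have i2 : Integrable (fun ω => ∑ j, ∑ k, (B i j * B i k) * (u ω j * u ω k * u ω l ^ 2)) μ :=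
    integrable_finset_sum _ fun j _ => integrable_finset_sum _ fun k _ =>
      (int_uul hL4 j k l).const_mul _
  rw [integral_add i1 i2, integral_add ((int_u2 hL4 l).const_mul _)
    (integrable_finset_sum _ fun j _ => (int_ul2 hL4 j l).const_mul _)]
  rw [integral_finset_sum _ (fun j _ => (int_ul2 hL4 j l).const_mul _),
    integral_finset_sum _ (fun j _ => integrable_finset_sum _ fun k _ =>
      (int_uul hL4 j k l).const_mul _)]
  simp only [integral_const_mul, hvar l, mul_one, mom3 hindep hmean hthird hL4, mul_zero,
    Finset.sum_const_zero, add_zero]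
  have h3 : ∀ j : Fin d, (∫ ω, ∑ k, (B i j * B i k) * (u ω j * u ω k * u ω l ^ 2) ∂μ)
      = B i j ^ 2 * (if j = l then κ else 1) := by
    intro j
    rw [integral_finset_sum _ (fun k _ => (int_uul hL4 j k l).const_mul _)]
    simp only [integral_const_mul]
    rw [Finset.sum_eq_single_of_mem j (Finset.mem_univ j)]
    · rcases eq_or_ne j l with rfl | hjl
      · have h4 : ∫ ω, u ω j * u ω j * u ω j ^ 2 ∂μ = κ := by
          rw [show (fun ω => u ω j * u ω j * u ω j ^ 2) = fun ω => u ω j ^ 4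
            from funext fun ω => by ring]
          exact hκ4 j
        rw [h4, if_pos rfl]; ring
      · have h4 : ∫ ω, u ω j * u ω j * u ω l ^ 2 ∂μ = 1 := by
          rw [show (fun ω => u ω j * u ω j * u ω l ^ 2) = fun ω => u ω j ^ 2 * u ω l ^ 2
            from funext fun ω => by ring]
          exact mom22 hindep hvar hL4 j l hjl
        rw [h4, if_neg hjl]; ring
    · intro k _ hkj
      rw [mom4 hmeas hindep hmean hthird hL4 j k l (Ne.symm hkj), mul_zero]
  rw [Finset.sum_congr rfl fun j _ => h3 j]
  have h5 : ∑ j, B i j ^ 2 * (if j = l then κ else 1)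
      = (∑ j, B i j ^ 2) + (κ - 1) * B i l ^ 2 := by
    have : ∀ j : Fin d, B i j ^ 2 * (if j = l then κ else 1)
        = B i j ^ 2 + (if j = l then (κ - 1) * B i j ^ 2 else 0) := by
      intro j; split <;> ring
    rw [Finset.sum_congr rfl fun j _ => this j, Finset.sum_add_distrib,
      Finset.sum_ite_eq' Finset.univ l (fun j => (κ - 1) * B i j ^ 2)]
    simp
  rw [h5]; ring

include hmeas hindep hmean hthird hvar hL4 hκ4 in
lemma bigInt :
    ∫ ω, (∑ i, (a i + ∑ j, B i j * u ω j) ^ 2) * (1 + ∑ l, u ω l ^ 2) ∂μ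
      = ((d : ℝ) + 1) * (∑ i, a i ^ 2) + ((d : ℝ) + κ) * ∑ i, ∑ j, B i j ^ 2 := by
  have hP : (fun ω => (∑ i, (a i + ∑ j, B i j * u ω j) ^ 2) * (1 + ∑ l, u ω l ^ 2))
      = fun ω => ∑ i, ((a i + ∑ j, B i j * u ω j) ^ 2
          + ∑ l, (a i + ∑ j, B i j * u ω j) ^ 2 * u ω l ^ 2) := by
    funext ω
    rw [Finset.sum_mul]
    exact Finset.sum_congr rfl fun i _ => by rw [mul_add, mul_one, Finset.mul_sum]
  have memQ2 : ∀ i, MemLp (fun ω => (a i + ∑ j, B i j * u ω j) ^ 2) 2 μ := by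
    intro i
    have := memLp_mul (memT4 hL4 a B i) (memT4 hL4 a B i) e24
    simpa [pow_two] using this
  have intQ : ∀ i, Integrable (fun ω => (a i + ∑ j, B i j * u ω j) ^ 2) μ := fun i =>
    ((memT4 hL4 a B i).mono_exponent (by norm_num)).integrable_sq
  have intQl : ∀ i l, Integrable
      (fun ω => (a i + ∑ j, B i j * u ω j) ^ 2 * u ω l ^ 2) μ := fun i l =>
    memLp_one_iff_integrable.mp (memLp_mul (memQ2 i) (U2 hL4 l) e12)
  rw [hP, integral_finset_sum (f := fun i ω => (a i + ∑ j, B i j * u ω j) ^ 2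
      + ∑ l, (a i + ∑ j, B i j * u ω j) ^ 2 * u ω l ^ 2) _
    (fun i _ => (intQ i).add (integrable_finset_sum _ fun l _ => intQl i l))]
  have hterm : ∀ i : Fin d, (∫ ω, ((a i + ∑ j, B i j * u ω j) ^ 2
      + ∑ l, (a i + ∑ j, B i j * u ω j) ^ 2 * u ω l ^ 2) ∂μ)
      = ((d : ℝ) + 1) * a i ^ 2 + ((d : ℝ) + κ) * ∑ j, B i j ^ 2 := by
    intro i
    rw [integral_add (intQ i) (integrable_finset_sum _ fun l _ => intQl i l),
      integral_finset_sum _ (fun l _ => intQl i l),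
      IA hindep hmean hvar hL4 a B i,
      Finset.sum_congr rfl fun l _ => IB hmeas hindep hmean hthird hvar hL4 κ hκ4 a B i l]
    rw [Finset.sum_add_distrib, Finset.sum_const, Finset.card_univ, Fintype.card_fin,
      nsmul_eq_mul, ← Finset.mul_sum]
    ring
  rw [Finset.sum_congr rfl fun i _ => hterm i, Finset.sum_add_distrib, ← Finset.mul_sum,
    ← Finset.mul_sum]

end integrals

end aux

/-- for symmetric PSD `M` and `f(z) = ½(z − z̄)ᵀ M (z − z̄)`, the
matrix-smoothness inequality holds with equality, and the estimator `g = ∇_w f(T_w(u))`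
attains `E‖g‖₂² = (d+1)‖M(m − z̄)‖₂² + (d+κ)‖MC‖_F²`; hence the matrix-smoothness bound
is unimprovable. -/
theorem stmt_11 {Ω : Type*} [MeasurableSpace Ω] (μ : Measure Ω) [IsProbabilityMeasure μ]
    (d : ℕ) (hd : 0 < d) (u : Ω → EuclideanSpace ℝ (Fin d))
    (hmeas : ∀ i, Measurable fun ω => u ω i)
    (hindep : iIndepFun (fun i ω => u ω i) μ)
    (hident : ∀ i j : Fin d, IdentDistrib (fun ω => u ω i) (fun ω => u ω j) μ μ)
    (hmean : ∀ i, ∫ ω, u ω i ∂μ = 0)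
    (hthird : ∀ i, ∫ ω, u ω i ^ 3 ∂μ = 0)
    (hvar : ∀ i, ∫ ω, u ω i ^ 2 ∂μ = 1)
    (hL4 : ∀ i, MemLp (fun ω => u ω i) 4 μ)
    (κ : ℝ) (hκ : κ = ∫ ω, u ω ⟨0, hd⟩ ^ 4 ∂μ)
    (M : Matrix (Fin d) (Fin d) ℝ) (hM : M.PosSemidef)
    (zbar : EuclideanSpace ℝ (Fin d))
    (f : EuclideanSpace ℝ (Fin d) → ℝ)
    (hf : f = fun z => (1 / 2) * ⟪z - zbar, Matrix.toEuclideanLin M (z - zbar)⟫)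
    (m : EuclideanSpace ℝ (Fin d)) (C : Matrix (Fin d) (Fin d) ℝ) :
    (∀ y z : EuclideanSpace ℝ (Fin d),
      ‖gradient f y - gradient f z‖ = ‖Matrix.toEuclideanLin M (y - z)‖) ∧
    ∫ ω, ‖gradient (fun w' => f (Tmap w' (u ω))) (param m C)‖ ^ 2 ∂μ
      = ((d : ℝ) + 1) * ‖Matrix.toEuclideanLin M (m - zbar)‖ ^ 2
        + ((d : ℝ) + κ) * ∑ i, ∑ j, (M * C) i j ^ 2 := by
  subst hf
  have L1 : ∀ y : EuclideanSpace ℝ (Fin d),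
      gradient (fun z => (1 / 2 : ℝ) * ⟪z - zbar, Matrix.toEuclideanLin M (z - zbar)⟫) y
        = Matrix.toEuclideanLin M (y - zbar) := fun y => (quad_grad M hM.1 zbar y).gradient
  constructor
  · intro y z
    rw [L1 y, L1 z, ← map_sub, sub_sub_sub_cancel_right]
  · -- notation
    set a : Fin d → ℝ := fun i => ∑ k, M i k * (m k - zbar k) with ha
    set Bm : Fin d → Fin d → ℝ := fun i j => ∑ k, M i k * C k j with hBm
    have happ : ∀ (x : EuclideanSpace ℝ (Fin d)) i,
        (Matrix.toEuclideanLin M x) i = ∑ k, M i k * x k := by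
      intro x i
      simp [Matrix.toEuclideanLin_apply, Matrix.mulVec, dotProduct]
    have hv : ∀ ω i,
        (Matrix.toEuclideanLin M (Tmap (param m C) (u ω) - zbar)) i
          = a i + ∑ j, Bm i j * u ω j := by
      intro ω i
      rw [happ]
      have hx : ∀ k, (Tmap (param m C) (u ω) - zbar) k
          = (∑ j, C k j * u ω j + m k) - zbar k := by
        intro k
        simp [Tmap, param, WithLp.equiv_symm_apply, PiLp.toLp_apply]
      rw [Finset.sum_congr rfl fun k _ => by rw [hx k]]
      have hk : ∀ k : Fin d, M i k * ((∑ j, C k j * u ω j + m k) - zbar k)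
          = (∑ j, (M i k * C k j) * u ω j) + M i k * (m k - zbar k) := by
        intro k
        rw [add_sub_assoc, mul_add, Finset.mul_sum]
        congr 1
        exact Finset.sum_congr rfl fun j _ => by ring
      rw [Finset.sum_congr rfl fun k _ => hk k, Finset.sum_add_distrib, Finset.sum_comm]
      rw [Finset.sum_congr rfl fun j (_ : j ∈ Finset.univ) => (Finset.sum_mul _ _ _).symm]
      exact add_comm _ _
    have hgrad : ∀ ω, gradient
        (fun w' => (1 / 2 : ℝ) * ⟪Tmap w' (u ω) - zbar,
          Matrix.toEuclideanLin M (Tmap w' (u ω) - zbar)⟫) (param m C)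
        = Gvec (Matrix.toEuclideanLin M (Tmap (param m C) (u ω) - zbar)) (u ω) := by
      intro ω
      exact (comp_grad _ (u ω) (param m C) _
        (quad_grad M hM.1 zbar (Tmap (param m C) (u ω)))).gradient
    have hκ4 : ∀ l, ∫ ω, u ω l ^ 4 ∂μ = κ := by
      intro l
      rw [hκ]
      exact ((hident l ⟨0, hd⟩).comp (measurable_id.pow_const 4)).integral_eq
    have hint : (fun ω => ‖gradient
        (fun w' => (1 / 2 : ℝ) * ⟪Tmap w' (u ω) - zbar,
          Matrix.toEuclideanLin M (Tmap w' (u ω) - zbar)⟫) (param m C)‖ ^ 2)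
        = fun ω => (∑ i, (a i + ∑ j, Bm i j * u ω j) ^ 2) * (1 + ∑ l, u ω l ^ 2) := by
      funext ω
      rw [hgrad ω, norm_Gvec_sq]
      congr 1
      exact Finset.sum_congr rfl fun i _ => by rw [hv ω i]
    rw [hint, bigInt hmeas hindep hmean hthird hvar hL4 κ hκ4 a Bm]
    have e1 : ‖Matrix.toEuclideanLin M (m - zbar)‖ ^ 2 = ∑ i, a i ^ 2 := by
      rw [norm_sq_euclid]
      refine Finset.sum_congr rfl fun i _ => ?_
      rw [happ]
      rfl
    have e2 : (∑ i, ∑ j, (M * C) i j ^ 2) = ∑ i, ∑ j, Bm i j ^ 2 :=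
      Finset.sum_congr rfl fun i _ => Finset.sum_congr rfl fun j _ => by
        rw [Matrix.mul_apply]
    rw [e1, e2]
end
end
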